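/- Let ℜ₀ be a finite family of polytopes in ℝ^N satisfying (H1) and containing all singletons {x} for x ∈ E (the case r_min = 1). Then Ω_{ℜ₀}(d) = C for every d ∈ S, so that ℜ₁ = F(ℜ₀) = {C}; moreover ℜ₂ = F({C}) is the family of all faces of C, ℜ₂ contains all singletons {x}, x ∈ E, and consequently ℜ₃ = {C} = ℜ₁. -/

import Mathlib

open scoped RealInnerProductSpace
open Set

noncomputable section

/-- The ambient Euclidean space `ℝ^N`. -/
abbrev Euc (N : ℕ) : Type := EuclideanSpace ℝ (Fin N)

/-- A polytope: a nonempty convex compact subset of `ℝ^N` with finitely many extreme points. -/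
def IsPolytope {N : ℕ} (Ω : Set (Euc N)) : Prop :=
  Ω.Nonempty ∧ Convex ℝ Ω ∧ IsCompact Ω ∧ (Set.extremePoints ℝ Ω).Finite

/-- The unit sphere `S` of `ℝ^N`. -/
def sph (N : ℕ) : Set (Euc N) := Metric.sphere (0 : Euc N) 1

/-- `E(Ω,d)`: the set of `d`-active extreme points of `Ω`. -/
def activeExt {N : ℕ} (Ω : Set (Euc N)) (d : Euc N) : Set (Euc N) :=
  {x ∈ Set.extremePoints ℝ Ω | ∀ y ∈ Ω, ⟪y, d⟫ ≤ ⟪x, d⟫}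

/-- `Ω_ℜ(d) = conv (⋃_{Ω ∈ ℜ} E(Ω,d))`, the dual polytope of the family `ℜ` in direction `d`. -/
def dualPoly {N : ℕ} (ℛ : Set (Set (Euc N))) (d : Euc N) : Set (Euc N) :=
  convexHull ℝ (⋃ Ω ∈ ℛ, activeExt Ω d)

/-- The dual family `F(ℜ) = {Ω_ℜ(d) : d ∈ S}`. -/
def dualFam {N : ℕ} (ℛ : Set (Set (Euc N))) : Set (Set (Euc N)) :=
  dualPoly ℛ '' sph N

/-- `E_ℜ`, the set of extreme points of all polytopes of the family `ℜ`. -/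
def extFam {N : ℕ} (ℛ : Set (Set (Euc N))) : Set (Euc N) :=
  ⋃ Ω ∈ ℛ, Set.extremePoints ℝ Ω

/-- The face `F(Ω,d)` of `Ω` in direction `d` (the set of minimizers of `⟨·,d⟩` on `Ω`). -/
def face {N : ℕ} (Ω : Set (Euc N)) (d : Euc N) : Set (Euc N) :=
  {x ∈ Ω | ∀ z ∈ Ω, ⟪x, d⟫ ≤ ⟪z, d⟫}

/-!
All extreme points of members of `ℜ₀` lie in `E`, and `ℜ₀` contains the singletons of `E`, so in
every direction the active extreme points of `ℜ₀` are exactly `E` and every dual polytope is `C`.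
For the single polytope `C`, the points active in direction `d` are the extreme points of the
exposed face `F(C, -d)`, which by Krein–Milman is their convex hull; so `F({C})` consists of the
faces of `C`. By (H1) each `x ∈ E` is strictly separated from `conv (E \ {x})` by a hyperplane whose
normal exposes `{x}` as a face of `C`. Hence `F({C})` again contains the singletons of `E`, its
extreme points lie in `E`, and the first step gives `F(F({C})) = {C}`.
-/

theorem IsCompact.convexHull_extremePoints_eq {V : Type*} [AddCommGroup V] [Module ℝ V]
    [TopologicalSpace V] [T2Space V] [IsTopologicalAddGroup V] [ContinuousSMul ℝ V]
    [LocallyConvexSpace ℝ V] {K : Set V} (hK : IsCompact K) (hconv : Convex ℝ K)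
    (hfin : (K.extremePoints ℝ).Finite) : convexHull ℝ (K.extremePoints ℝ) = K := by
  rw [← (hfin.isCompact_convexHull (𝕜 := ℝ)).isClosed.closure_eq]
  exact closure_convexHull_extremePoints hK hconv

theorem exists_inner_lt_of_notMem_convexHull {V : Type*} [NormedAddCommGroup V]
    [InnerProductSpace ℝ V] [CompleteSpace V] {s : Set V} (hs : s.Finite) {x : V}
    (hx : x ∉ convexHull ℝ s) : ∃ v : V, ∀ y ∈ s, ⟪y, v⟫ < ⟪x, v⟫ := by
  obtain ⟨f, u, hfs, hux⟩ := geometric_hahn_banach_closed_point (convex_convexHull ℝ s)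
    (hs.isCompact_convexHull (𝕜 := ℝ)).isClosed hx
  refine ⟨(InnerProductSpace.toDual ℝ V).symm f, fun y hy => ?_⟩
  rw [real_inner_comm, real_inner_comm _ x, InnerProductSpace.toDual_symm_apply,
    InnerProductSpace.toDual_symm_apply]
  exact (hfs y (subset_convexHull ℝ s hy)).trans hux

section DualFamily

variable {N : ℕ}

lemma sph_nonempty (hN : 0 < N) : (sph N).Nonempty :=
  ⟨EuclideanSpace.single ⟨0, hN⟩ 1, by simp [sph]⟩

lemma neg_mem_sph {d : Euc N} (hd : d ∈ sph N) : -d ∈ sph N := by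
  simpa [sph] using hd

lemma exists_mem_sph_inner_lt (hN : 0 < N) {s : Set (Euc N)} {x v : Euc N}
    (hv : ∀ y ∈ s, ⟪y, v⟫ < ⟪x, v⟫) : ∃ d ∈ sph N, ∀ y ∈ s, ⟪y, d⟫ < ⟪x, d⟫ := by
  rcases eq_or_ne v 0 with rfl | hv0
  · obtain ⟨d, hd⟩ := sph_nonempty hN
    exact ⟨d, hd, fun y hy => by simpa using hv y hy⟩
  · refine ⟨‖v‖⁻¹ • v, ?_, fun y hy => ?_⟩
    · rw [sph, mem_sphere_zero_iff_norm, norm_smul, norm_inv, norm_norm,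
        inv_mul_cancel₀ (norm_ne_zero_iff.2 hv0)]
    · simp only [real_inner_smul_right]
      exact mul_lt_mul_of_pos_left (hv y hy) (by positivity)

lemma activeExt_singleton (x d : Euc N) : activeExt {x} d = {x} := by
  ext y
  simp +contextual [activeExt]

lemma biUnion_activeExt_eq {ℛ : Set (Set (Euc N))} {E : Set (Euc N)} (hext : extFam ℛ ⊆ E)
    (hsing : ∀ x ∈ E, {x} ∈ ℛ) (d : Euc N) : ⋃ Ω ∈ ℛ, activeExt Ω d = E := by
  refine Subset.antisymm (iUnion₂_subset fun Ω hΩ y hy => hext ?_) fun x hx => ?_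
  · exact mem_biUnion hΩ hy.1
  · exact mem_biUnion (hsing x hx) (by rw [activeExt_singleton]; rfl)

lemma dualPoly_eq_convexHull {ℛ : Set (Set (Euc N))} {E : Set (Euc N)} (hext : extFam ℛ ⊆ E)
    (hsing : ∀ x ∈ E, {x} ∈ ℛ) (d : Euc N) : dualPoly ℛ d = convexHull ℝ E := by
  rw [dualPoly, biUnion_activeExt_eq hext hsing]

lemma dualFam_eq_singleton (hN : 0 < N) {ℛ : Set (Set (Euc N))} {C : Set (Euc N)}
    (h : ∀ d, dualPoly ℛ d = C) : dualFam ℛ = {C} := by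
  rw [dualFam, show dualPoly ℛ = fun _ => C from funext h]
  exact (sph_nonempty hN).image_const C

lemma dualPoly_singleton (C : Set (Euc N)) (d : Euc N) :
    dualPoly {C} d = convexHull ℝ (activeExt C d) := by
  simp [dualPoly]

lemma face_neg_eq_toExposed (Ω : Set (Euc N)) (d : Euc N) :
    face Ω (-d) = (innerSL ℝ d).toExposed Ω := by
  ext x
  simp [face, ContinuousLinearMap.toExposed, real_inner_comm d]

lemma activeExt_eq_extremePoints_face (Ω : Set (Euc N)) (d : Euc N) :
    activeExt Ω d = (face Ω (-d)).extremePoints ℝ := by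
  rw [face_neg_eq_toExposed, ContinuousLinearMap.toExposed.isExposed.isExtreme.extremePoints_eq]
  ext x
  simp only [activeExt, ContinuousLinearMap.toExposed, innerSL_apply_apply, mem_ofPred_eq,
    mem_inter_iff, real_inner_comm d]
  exact ⟨fun h => ⟨⟨extremePoints_subset h.1, h.2⟩, h.1⟩, fun h => ⟨h.2, h.1.2⟩⟩

lemma convexHull_activeExt_eq_face {C : Set (Euc N)} (hC : IsCompact C) (hconv : Convex ℝ C)
    (hfin : (C.extremePoints ℝ).Finite) (d : Euc N) :
    convexHull ℝ (activeExt C d) = face C (-d) := by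
  have hexp : IsExposed ℝ C (face C (-d)) :=
    face_neg_eq_toExposed C d ▸ ContinuousLinearMap.toExposed.isExposed
  rw [activeExt_eq_extremePoints_face]
  refine (hexp.isCompact hC).convexHull_extremePoints_eq (hexp.convex hconv) (hfin.subset ?_)
  rw [← activeExt_eq_extremePoints_face]
  exact fun x hx => hx.1

lemma dualFam_singleton_eq_faces {C : Set (Euc N)} (hC : IsCompact C) (hconv : Convex ℝ C)
    (hfin : (C.extremePoints ℝ).Finite) :
    dualFam {C} = {F | ∃ d ∈ sph N, F = face C d} := by
  ext F
  simp only [dualFam, mem_image, mem_ofPred_eq, dualPoly_singleton,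
    convexHull_activeExt_eq_face hC hconv hfin]
  constructor
  · rintro ⟨d, hd, rfl⟩
    exact ⟨-d, neg_mem_sph hd, rfl⟩
  · rintro ⟨d, hd, rfl⟩
    exact ⟨-d, neg_mem_sph hd, by rw [neg_neg]⟩

lemma extFam_dualFam_singleton_subset (C : Set (Euc N)) :
    extFam (dualFam {C}) ⊆ C.extremePoints ℝ := by
  simp only [extFam, dualFam, biUnion_image, iUnion₂_subset_iff, dualPoly_singleton]
  exact fun d _ x hx => (extremePoints_convexHull_subset hx).1

lemma activeExt_convexHull_eq_singleton {E : Set (Euc N)} (hE : E.Finite) {x d : Euc N}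
    (hx : x ∈ E) (hd : ∀ y ∈ E \ {x}, ⟪y, d⟫ < ⟪x, d⟫) :
    activeExt (convexHull ℝ E) d = {x} := by
  have hxC : x ∈ convexHull ℝ E := subset_convexHull ℝ E hx
  have hmax : convexHull ℝ E ⊆ {z | ⟪z, d⟫ ≤ ⟪x, d⟫} := by
    refine convexHull_min (fun y hy => ?_) ?_
    · show ⟪y, d⟫ ≤ ⟪x, d⟫
      rcases eq_or_ne y x with rfl | hne
      exacts [le_rfl, (hd y ⟨hy, hne⟩).le]
    · exact convex_halfSpace_le (𝕜 := ℝ) (f := fun z : Euc N => ⟪z, d⟫)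
        ⟨fun a b => inner_add_left a b d, fun c a => real_inner_smul_left a d c⟩ _
  have hne : (activeExt (convexHull ℝ E) d).Nonempty := by
    rw [← convexHull_nonempty_iff (𝕜 := ℝ), convexHull_activeExt_eq_face
      (hE.isCompact_convexHull (𝕜 := ℝ)) (convex_convexHull ℝ E)
      (hE.subset extremePoints_convexHull_subset)]
    exact ⟨x, hxC, fun z hz => by simpa [inner_neg_right] using hmax hz⟩
  refine hne.subset_singleton_iff.1 fun y hy => ?_
  by_contra hyx
  exact (hd y ⟨extremePoints_convexHull_subset hy.1, hyx⟩).not_ge (hy.2 x hxC)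

lemma singleton_mem_dualFam_convexHull (hN : 0 < N) {E : Set (Euc N)} (hE : E.Finite) {x : Euc N}
    (hx : x ∈ E) (hxE : x ∉ convexHull ℝ (E \ {x})) : {x} ∈ dualFam {convexHull ℝ E} := by
  obtain ⟨v, hv⟩ := exists_inner_lt_of_notMem_convexHull (hE.subset sdiff_subset) hxE
  obtain ⟨d, hd, hdx⟩ := exists_mem_sph_inner_lt hN hv
  refine ⟨d, hd, ?_⟩
  rw [dualPoly_singleton, activeExt_convexHull_eq_singleton hE hx hdx, convexHull_singleton]

lemma extremePoints_convexHull_eq_of_forall_notMem {E : Set (Euc N)} (hE : E.Finite)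
    (hind : ∀ x ∈ E, x ∉ convexHull ℝ (E \ {x})) : (convexHull ℝ E).extremePoints ℝ = E := by
  refine extremePoints_convexHull_subset.antisymm fun x hx => ?_
  obtain ⟨v, hv⟩ := exists_inner_lt_of_notMem_convexHull (hE.subset sdiff_subset) (hind x hx)
  exact ((activeExt_convexHull_eq_singleton hE hx hv).ge rfl).1

end DualFamily

/-- the case `r_min = 1`: if `ℜ₀` contains all singletons `{x}`, `x ∈ E`,
then `ℜ₁ = {C}`, `ℜ₂` is the family of all faces of `C`, contains all singletons,
and `ℜ₃ = {C} = ℜ₁`. -/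
theorem rmin_one_case {N : ℕ} (hN : 0 < N) (ℛ₀ : Set (Set (Euc N))) (hfin : ℛ₀.Finite)
    (hpoly : ∀ Ω ∈ ℛ₀, IsPolytope Ω)
    (E : Set (Euc N)) (hE : E = extFam ℛ₀)
    (C : Set (Euc N)) (hC : C = convexHull ℝ E)
    (H1 : ∀ x ∈ E, x ∉ convexHull ℝ (E \ {x}))
    (hsing : ∀ x ∈ E, ({x} : Set (Euc N)) ∈ ℛ₀) :
    (∀ d ∈ sph N, dualPoly ℛ₀ d = C) ∧
      dualFam ℛ₀ = {C} ∧
      dualFam {C} = {F : Set (Euc N) | ∃ d ∈ sph N, F = face C d} ∧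
      (∀ x ∈ E, ({x} : Set (Euc N)) ∈ dualFam ({C} : Set (Set (Euc N)))) ∧
      dualFam^[3] ℛ₀ = dualFam ℛ₀ := by
  subst hC
  have hEfin : E.Finite := hE ▸ hfin.biUnion fun Ω hΩ => (hpoly Ω hΩ).2.2.2
  have hextC := extremePoints_convexHull_eq_of_forall_notMem hEfin H1
  have hR₁ : ∀ d, dualPoly ℛ₀ d = convexHull ℝ E := dualPoly_eq_convexHull hE.ge hsing
  have hsing₂ : ∀ x ∈ E, {x} ∈ dualFam {convexHull ℝ E} := fun x hx =>
    singleton_mem_dualFam_convexHull hN hEfin hx (H1 x hx)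
  have hR₃ : dualFam (dualFam {convexHull ℝ E}) = {convexHull ℝ E} :=
    dualFam_eq_singleton hN
      (dualPoly_eq_convexHull ((extFam_dualFam_singleton_subset _).trans hextC.subset) hsing₂)
  refine ⟨fun d _ => hR₁ d, dualFam_eq_singleton hN hR₁,
    dualFam_singleton_eq_faces (hEfin.isCompact_convexHull (𝕜 := ℝ)) (convex_convexHull ℝ E)
      (hEfin.subset extremePoints_convexHull_subset), hsing₂, ?_⟩
  change dualFam (dualFam (dualFam ℛ₀)) = dualFam ℛ₀
  rw [dualFam_eq_singleton hN hR₁, hR₃]
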